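/- arXiv:2511.21623 — 3 statements merged into one kernel-verified Lean document; each statement's English description precedes it below -/
import Mathlib

section
/- Let I be a finite set and E a simplicial complex on I (i.e. E ⊆ 𝒫(I), ∅ ∉ E, and s ∈ E, ∅ ≠ s' ⊆ s imply s' ∈ E). There exists one and only one perfect canonical p-site a over base I with Nerve σ_a = E, namely a = ca(I, E). -/
/-- The parting function of a p-site `⟨I, A, (A_i)⟩`: `π(x) = {i ∈ I | x ∈ A_i}`. -/
def parting {I A : Type*} (α : I → Set A) (x : A) : Set I := {i | x ∈ α i}

/-- The Knit of a p-site: `κ = {s ⊆ I | ∃ x ∈ A, π(x) = s}`. -/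
def knit {I A : Type*} (α : I → Set A) : Set (Set I) := {s | ∃ x, parting α x = s}

/-- The Nerve of a p-site: `σ = {s ⊆ I | s ≠ ∅ ∧ ∃ x ∈ A, s ⊆ π(x)}`. -/
def nerve {I A : Type*} (α : I → Set A) : Set (Set I) :=
  {s | s.Nonempty ∧ ∃ x, s ⊆ parting α x}

/-- The profile of the canonical p-site `ca(I, 𝒜)`: base `I`, ground `𝒜`,
profile `𝒜_i = {s ∈ 𝒜 | i ∈ s}`. -/
def canonProfile {I : Type*} (𝒜 : Set (Set I)) : I → Set ↥𝒜 :=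
  fun i => {s | i ∈ (s : Set I)}

lemma parting_canon {I : Type*} (𝒜 : Set (Set I)) (x : ↥𝒜) :
    parting (canonProfile 𝒜) x = (x : Set I) := by
  ext i; rfl

lemma knit_canon {I : Type*} (𝒜 : Set (Set I)) :
    knit (canonProfile 𝒜) = 𝒜 := by
  ext s
  constructor
  · rintro ⟨x, hx⟩
    rw [parting_canon] at hx
    rw [← hx]; exact x.2
  · intro hs
    exact ⟨⟨s, hs⟩, parting_canon _ _⟩

/-- Let `E` be a simplicial complex on a finite set `I`. There is one and only
one perfect canonical p-site with Nerve `E`, namely `ca(I, E)`: the canonical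
p-site `ca(I, E)` is perfect (its Knit equals its Nerve) with Nerve `E`, and
any perfect canonical p-site `ca(I, 𝒜)` with Nerve `E` satisfies `𝒜 = E`. -/
theorem perfect_canonical_psite_unique {I : Type*} [Fintype I] (E : Set (Set I))
    (hE_empty : ∅ ∉ E)
    (hE_down : ∀ s ∈ E, ∀ s' : Set I, s' ≠ ∅ → s' ⊆ s → s' ∈ E) :
    (knit (canonProfile E) = nerve (canonProfile E) ∧ nerve (canonProfile E) = E) ∧
    ∀ 𝒜 : Set (Set I),
      knit (canonProfile 𝒜) = nerve (canonProfile 𝒜) →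
      nerve (canonProfile 𝒜) = E → 𝒜 = E := by

  have hnerve : nerve (canonProfile E) = E := by
    ext s
    constructor
    · rintro ⟨hne, x, hx⟩
      rw [parting_canon] at hx
      exact hE_down _ x.2 s hne.ne_empty hx
    · intro hs
      refine ⟨Set.nonempty_iff_ne_empty.2 (fun h => hE_empty (h ▸ hs)), ⟨s, hs⟩, ?_⟩
      rw [parting_canon]
  refine ⟨⟨by rw [knit_canon, hnerve], hnerve⟩, fun 𝒜 h1 h2 => ?_⟩
  rw [← knit_canon 𝒜, h1, h2]
end

section
/- Let a = ⟨I, A, (A_i)⟩ and b = ⟨J, A, (B_j)⟩ be two p-sites with the same ground A, and suppose φ : I → J is a BP-map from a to b, i.e. ⋃_{i ∈ φ⁻¹(j)} A_i = B_j for every j ∈ J. Then (a) κ_b = φ̂(κ_a), i.e. the Knit of b is the image under φ̂ of the Knit of a; and (b) σ_b = φ̂(σ_a), i.e. the Nerve of b is the image under φ̂ of the Nerve of a. -/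
lemma parting_eq {I J A : Type*} (α : I → Set A) (β : J → Set A) (φ : I → J)
    (hBP : ∀ j, (⋃ i ∈ φ ⁻¹' {j}, α i) = β j) (x : A) :
    parting β x = φ '' parting α x := by
  ext j
  simp only [parting, Set.mem_setOf_eq, Set.mem_image, ← hBP j, Set.mem_iUnion,
    Set.mem_preimage, Set.mem_singleton_iff]
  tauto

/-- If `φ : I → J` is a BP-map between p-sites `a = ⟨I, A, (A_i)⟩` and
`b = ⟨J, A, (B_j)⟩` with the same ground, then (a) `κ_b = φ̂(κ_a)` and
(b) `σ_b = φ̂(σ_a)`. -/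
theorem bp_map_knit_nerve_image {I J A : Type*} [Fintype I] [Fintype J]
    (α : I → Set A) (β : J → Set A) (φ : I → J)
    (hBP : ∀ j, (⋃ i ∈ φ ⁻¹' {j}, α i) = β j) :
    knit β = (fun s : Set I => φ '' s) '' knit α ∧
    nerve β = (fun s : Set I => φ '' s) '' nerve α := by
  constructor
  · ext s
    constructor
    · rintro ⟨x, rfl⟩
      exact ⟨parting α x, ⟨x, rfl⟩, (parting_eq α β φ hBP x).symm⟩
    · rintro ⟨t, ⟨x, rfl⟩, rfl⟩
      exact ⟨x, parting_eq α β φ hBP x⟩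
  · ext s
    constructor
    · rintro ⟨hne, x, hsub⟩
      refine ⟨φ ⁻¹' s ∩ parting α x, ⟨?_, x, Set.inter_subset_right⟩, ?_⟩
      · obtain ⟨j, hj⟩ := hne
        obtain ⟨i, hi, rfl⟩ := (parting_eq α β φ hBP x ▸ hsub) hj
        exact ⟨i, hj, hi⟩
      · ext j
        constructor
        · rintro ⟨i, ⟨hi1, _⟩, rfl⟩; exact hi1
        · intro hj
          obtain ⟨i, hi, rfl⟩ := (parting_eq α β φ hBP x ▸ hsub) hj
          exact ⟨i, ⟨hj, hi⟩, rfl⟩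
    · rintro ⟨t, ⟨hne, x, hsub⟩, rfl⟩
      refine ⟨hne.image φ, x, ?_⟩
      rw [parting_eq α β φ hBP x]
      exact Set.image_mono (f := φ) hsub
end

section
/- Let I be a finite set, let i₀, j₀ ∈ I with i₀ ≠ j₀, and let E be a simplicial complex on I (i.e. E ⊆ 𝒫(I), ∅ ∉ E, and s ∈ E, ∅ ≠ s' ⊆ s imply s' ∈ E). The following are equivalent: (i) the delegation δ from i₀ to j₀ is friendly in (I, E), i.e. for every s ∈ E with i₀ ∈ s one has s ∪ {j₀} ∈ E; (ii) E = (E^{i₀}_{j₀})^↓, where E^{i₀}_{j₀} = {s ∈ E | i₀ ∈ s ⇒ j₀ ∈ s} and ^↓ denotes the downward closure {s ⊆ I | s ≠ ∅ and ∃m ∈ E^{i₀}_{j₀}, s ⊆ m}; (iii) E^max ⊆ E^{i₀}_{j₀}, where E^max is the set of maximal elements of E with respect to inclusion. -/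
/-- Downward closure of a collection `K ⊆ 𝒫(I)`:
`K^↓ = {s ⊆ I | s ≠ ∅ ∧ ∃ m ∈ K, s ⊆ m}`. -/
def downClosure {I : Type*} (K : Set (Set I)) : Set (Set I) :=
  {s | s.Nonempty ∧ ∃ m ∈ K, s ⊆ m}

/-- The maximal elements (for inclusion) of a collection `K ⊆ 𝒫(I)`. -/
def maxElems {I : Type*} (K : Set (Set I)) : Set (Set I) :=
  {s ∈ K | ∀ t ∈ K, s ⊆ t → s = t}

/-- Let `I` be finite, `i₀ ≠ j₀` in `I`, and `E` a simplicial complex on `I`.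
The following are equivalent:
(i) the delegation from `i₀` to `j₀` is friendly in `(I, E)`: for every
`s ∈ E` with `i₀ ∈ s`, `s ∪ {j₀} ∈ E`;
(ii) `E = (E^{i₀}_{j₀})^↓` where `E^{i₀}_{j₀} = {s ∈ E | i₀ ∈ s → j₀ ∈ s}`;
(iii) `E^max ⊆ E^{i₀}_{j₀}`. -/
theorem friendly_delegation_characterization {I : Type*} [Fintype I]
    (i₀ j₀ : I) (hne : i₀ ≠ j₀) (E : Set (Set I))
    (hE_empty : ∅ ∉ E)
    (hE_down : ∀ s ∈ E, ∀ s' : Set I, s' ≠ ∅ → s' ⊆ s → s' ∈ E) :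
    ((∀ s ∈ E, i₀ ∈ s → s ∪ {j₀} ∈ E) ↔
      E = downClosure {s ∈ E | i₀ ∈ s → j₀ ∈ s}) ∧
    ((∀ s ∈ E, i₀ ∈ s → s ∪ {j₀} ∈ E) ↔
      maxElems E ⊆ {s ∈ E | i₀ ∈ s → j₀ ∈ s}) := by

  -- auxiliary: every element of E lies below a maximal element
  have hmax : ∀ s ∈ E, ∃ m ∈ maxElems E, s ⊆ m := by
    intro s hs
    have hfin : {t ∈ E | s ⊆ t}.Finite := (Set.finite_univ.subset (Set.subset_univ _))
    obtain ⟨m, hm, hmx⟩ := Set.Finite.exists_maximalFor id {t ∈ E | s ⊆ t} hfin ⟨s, hs, subset_rfl⟩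
    refine ⟨m, ⟨hm.1, ?_⟩, hm.2⟩
    intro t ht hmt
    exact Set.Subset.antisymm hmt (hmx ⟨ht, hm.2.trans hmt⟩ hmt)
  have h13 : (∀ s ∈ E, i₀ ∈ s → s ∪ {j₀} ∈ E) → maxElems E ⊆ {s ∈ E | i₀ ∈ s → j₀ ∈ s} := by
    intro h s hs
    refine ⟨hs.1, fun hi => ?_⟩
    have := hs.2 (s ∪ {j₀}) (h s hs.1 hi) Set.subset_union_left
    rw [this]
    exact Set.mem_union_right _ rfl
  have h32 : (maxElems E ⊆ {s ∈ E | i₀ ∈ s → j₀ ∈ s}) → E = downClosure {s ∈ E | i₀ ∈ s → j₀ ∈ s} := by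
    intro h
    ext s
    constructor
    · intro hs
      obtain ⟨m, hm, hsm⟩ := hmax s hs
      refine ⟨Set.nonempty_iff_ne_empty.2 (fun he => hE_empty (he ▸ hs)), m, h hm, hsm⟩
    · rintro ⟨hne', m, hm, hsm⟩
      exact hE_down m hm.1 s (Set.nonempty_iff_ne_empty.1 hne') hsm
  have h21 : E = downClosure {s ∈ E | i₀ ∈ s → j₀ ∈ s} → (∀ s ∈ E, i₀ ∈ s → s ∪ {j₀} ∈ E) := by
    intro h s hs hi
    rw [h] at hs
    obtain ⟨hne', m, hm, hsm⟩ := hs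
    have hj : j₀ ∈ m := hm.2 (hsm hi)
    have : s ∪ {j₀} ⊆ m := Set.union_subset hsm (by simpa using hj)
    exact hE_down m hm.1 _ (Set.Nonempty.ne_empty ⟨j₀, Set.mem_union_right _ rfl⟩) this
  exact ⟨⟨fun h => h32 (h13 h), h21⟩, ⟨h13, fun h => h21 (h32 h)⟩⟩
end
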